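/- arXiv:2203.02566 — 3 statements merged into one kernel-verified Lean document; each statement's English description precedes it below -/
import Mathlib

section
/- Suppose p is an odd prime. Every virtually cyclic subgroup V of Γ = ℤⁿ ⋊_ρ ℤ/p (i.e., every subgroup containing a cyclic subgroup of finite index) is isomorphic as a group to one of: the trivial group, ℤ/p, ℤ, or ℤ × ℤ/p. -/
/-- The monoid homomorphism sending an additive automorphism of `A` to the corresponding
multiplicative automorphism of `Multiplicative A`. -/
def addAutToMulAut {A : Type*} [AddGroup A] : Multiplicative (AddAut A) →* MulAut (Multiplicative A) where
  toFun e := AddEquiv.toMultiplicative (Multiplicative.toAdd e)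
  map_one' := rfl
  map_mul' _ _ := rfl

/-- The semidirect product `Γ = ℤⁿ ⋊_ρ ℤ/p` (written multiplicatively), with multiplication
`(x,g)·(x',g') = (x + ρ(g)x', g+g')`. -/
abbrev Gam (p n : ℕ) (ρ : Multiplicative (ZMod p) →* Multiplicative (AddAut (Fin n → ℤ))) : Type :=
  (Multiplicative (Fin n → ℤ)) ⋊[addAutToMulAut.comp ρ] (Multiplicative (ZMod p))

/-!
Let `K` be the kernel of the projection `V → ℤ/p`. It embeds in `ℤⁿ`, so it is commutative and
torsion-free; raising to the power `[K : C ∩ K]` then embeds it into the cyclic group `C`, so `K`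
is trivial or infinite cyclic, `K = ⟨c⟩`. If `K` is trivial, `V` embeds in `ℤ/p`. Otherwise pick
`t ∈ V` mapping to the generator of `ℤ/p`. Conjugation by `t` is an automorphism of
`⟨c⟩ ≅ ℤ`, so `t²` commutes with `c`, and so does `tᵖ ∈ K`; since `p` is odd, `t` commutes with
`c`. Write `tᵖ = cᵐ`. If `p ∣ m`, then `t c^(-m/p)` has order `p` and splits `V → ℤ/p`, so
`V ≅ ℤ × ℤ/p`. Otherwise `xp + ym = 1` for some `x, y`, and `s = cˣ tʸ` satisfies `sᵖ = c`,
so `V = ⟨s⟩ ≅ ℤ`.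
-/

open Subgroup

section

variable {G : Type*} [Group G]

theorem isCyclic_of_isMulTorsionFree_of_finiteIndex [IsMulCommutative G] [IsMulTorsionFree G]
    (C : Subgroup G) [IsCyclic C] [C.FiniteIndex] : IsCyclic G := by
  open scoped IsMulCommutative in
  exact isCyclic_of_injective ((powMonoidHom C.index).codRestrict C C.pow_index_mem)
    fun _ _ h ↦ IsMulTorsionFree.pow_left_injective FiniteIndex.index_ne_zero
      (congrArg Subtype.val h)

theorem Subgroup.eq_bot_or_eq_zpowers_of_isMulTorsionFree (H : Subgroup G) [IsCyclic H]
    [IsMulTorsionFree H] : H = ⊥ ∨ ∃ c, ¬IsOfFinOrder c ∧ H = zpowers c := by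
  obtain ⟨c, rfl⟩ := H.isCyclic_iff_exists_zpowers_eq_top.mp ‹_›
  by_cases hc : c = 1
  · simp [hc]
  · refine .inr ⟨c, fun hfin ↦ ?_, rfl⟩
    have : (⟨c, mem_zpowers c⟩ : zpowers c) ≠ 1 := fun h ↦ hc (congrArg Subtype.val h)
    exact not_isOfFinOrder_of_isMulTorsionFree this (Submonoid.isOfFinOrder_coe.mp hfin)

theorem Function.Injective.isMulCommutative {H : Type*} [Group H] [IsMulCommutative H]
    (f : G →* H) (hf : Function.Injective f) : IsMulCommutative G :=
  isMulCommutative_iff.mpr fun a b ↦ hf (by simp only [map_mul, mul_comm'])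

instance Subgroup.isCyclic_subgroupOf (H K : Subgroup G) [IsCyclic H] :
    IsCyclic (H.subgroupOf K) :=
  isCyclic_of_injective ((K.subtype.comp (H.subgroupOf K).subtype).codRestrict H fun x ↦ x.2)
    fun _ _ h ↦ Subtype.ext (Subtype.ext (congrArg Subtype.val h :))

theorem nonempty_mulEquiv_int_of_zpowers_eq_top {c : G} (hc : ¬IsOfFinOrder c)
    (h : zpowers c = ⊤) : Nonempty (G ≃* Multiplicative ℤ) :=
  have : Infinite G := .of_injective _ (injective_zpow_iff_not_isOfFinOrder.mpr hc)
  ⟨(intEquivOfZPowersEqTop c h).symm⟩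

theorem nonempty_mulEquiv_int_prod_of_splitting {Q : Type*} [Group Q] (π : G →* Q) (σ : Q →* G)
    (hσ : ∀ q, π (σ q) = q) {c : G} (hc : ¬IsOfFinOrder c) (hker : π.ker = zpowers c)
    (hcσ : ∀ q, Commute c (σ q)) : Nonempty (G ≃* Multiplicative ℤ × Q) := by
  let Φ := (zpowersHom G c).noncommCoprod σ fun a q ↦ (hcσ q).zpow_left _
  have hΦ : ∀ x, Φ x = c ^ x.1.toAdd * σ x.2 := fun _ ↦ rfl
  have hπc : π c = 1 := (hker ▸ mem_zpowers c : c ∈ π.ker)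
  have hπΦ : ∀ x, π (Φ x) = x.2 := fun x ↦ by simp [hΦ, hπc, hσ]
  refine ⟨(MulEquiv.ofBijective Φ ⟨(injective_iff_map_eq_one Φ).mpr ?_, fun g ↦ ?_⟩).symm⟩
  · rintro ⟨a, q⟩ h
    obtain rfl : q = 1 := by simpa [h] using (hπΦ (a, q)).symm
    have : c ^ a.toAdd = c ^ (0 : ℤ) := by simpa [hΦ] using h
    simpa using injective_zpow_iff_not_isOfFinOrder.mpr hc this
  · have : g * (σ (π g))⁻¹ ∈ π.ker := by simp [hσ]
    obtain ⟨a, ha⟩ := mem_zpowers_iff.mp (hker ▸ this)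
    exact ⟨(.ofAdd a, π g), by simp [hΦ, ha]⟩

theorem commute_sq_of_conj_mem_zpowers {c t : G} (hc : ¬IsOfFinOrder c)
    (h₁ : t * c * t⁻¹ ∈ zpowers c) (h₂ : t⁻¹ * c * t ∈ zpowers c) : Commute (t ^ 2) c := by
  obtain ⟨k, hk⟩ := mem_zpowers_iff.mp h₁
  obtain ⟨j, hj⟩ := mem_zpowers_iff.mp h₂
  have hjk : j * k = 1 := by
    refine injective_zpow_iff_not_isOfFinOrder.mpr hc (?_ : c ^ (j * k) = c ^ (1 : ℤ))
    have := conj_zpow (a := t⁻¹) (b := c) (i := k)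
    rw [inv_inv] at this
    rw [zpow_mul, hj, this, hk]
    group
  have hk2 : k * k = 1 := by
    rcases Int.eq_one_or_neg_one_of_mul_eq_one' hjk with ⟨-, rfl⟩ | ⟨-, rfl⟩ <;> rfl
  have : t ^ 2 * c * (t ^ 2)⁻¹ = c := by
    calc t ^ 2 * c * (t ^ 2)⁻¹ = t * (t * c * t⁻¹) * t⁻¹ := by rw [sq]; group
      _ = c := by rw [← hk, ← conj_zpow, ← hk, ← zpow_mul, hk2, zpow_one]
  exact mul_inv_eq_iff_eq_mul.mp this

theorem Commute.of_sq_of_pow_odd {t c : G} {p : ℕ} (hodd : Odd p) (h₂ : Commute (t ^ 2) c)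
    (hp : Commute (t ^ p) c) : Commute t c := by
  obtain ⟨m, rfl⟩ := hodd
  have : t = t ^ (2 * m + 1) * (t ^ 2) ^ (-m : ℤ) := by group
  rw [this]
  exact hp.mul_left (h₂.zpow_left _)

variable {p : ℕ} [Fact p.Prime]

theorem MonoidHom.eq_one_or_surjective_of_zmod (π : G →* Multiplicative (ZMod p)) :
    π = 1 ∨ Function.Surjective π := by
  have : Fact (Nat.card (Multiplicative (ZMod p))).Prime := by
    simpa [Nat.card_eq_fintype_card] using ‹Fact p.Prime›
  exact π.range.eq_bot_or_eq_top_of_prime_card.imp MonoidHom.range_eq_bot_iff.mp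
    MonoidHom.range_eq_top.mp

theorem subsingleton_or_nonempty_mulEquiv_zmod (π : G →* Multiplicative (ZMod p))
    (hπ : Function.Injective π) : Subsingleton G ∨ Nonempty (G ≃* Multiplicative (ZMod p)) :=
  π.eq_one_or_surjective_of_zmod.imp (fun h ↦ ⟨fun a b ↦ hπ (by simp [h])⟩)
    fun h ↦ ⟨.ofBijective π ⟨hπ, h⟩⟩

theorem zpowers_eq_top_of_ker_le (π : G →* Multiplicative (ZMod p)) {s : G} (hs : π s ≠ 1)
    (hker : π.ker ≤ zpowers s) : zpowers s = ⊤ := by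
  have hmap : (zpowers s).map π = ⊤ := by
    rw [MonoidHom.map_zpowers]
    exact zpowers_eq_top_of_prime_card (p := p) (by simp [Nat.card_eq_fintype_card]) hs
  rw [← comap_map_eq_self hker, hmap, comap_top]

variable (π : G →* Multiplicative (ZMod p)) {c : G}

theorem MonoidHom.pow_mem_ker_of_zmod (t : G) : t ^ p ∈ π.ker := by
  rw [mem_ker, map_pow]
  simpa [Nat.card_eq_fintype_card] using pow_card_eq_one' (x := π t)

theorem nonempty_mulEquiv_int_prod_zmod (hc : ¬IsOfFinOrder c) (hker : π.ker = zpowers c)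
    {u : G} (hu : π u = .ofAdd 1) (hup : u ^ p = 1) (hcu : Commute c u) :
    Nonempty (G ≃* Multiplicative (ℤ × ZMod p)) := by
  let χ : Multiplicative (ZMod p) →* G := AddMonoidHom.toMultiplicativeLeft <|
    ZMod.lift p ⟨zmultiplesHom (Additive G) (.ofMul u),
      by simpa [← ofMul_pow] using congrArg Additive.ofMul hup⟩
  have hχ : ∀ q, ∃ k : ℤ, q = .ofAdd 1 ^ k ∧ χ q = u ^ k := fun q ↦ by
    obtain ⟨k, hk⟩ := ZMod.intCast_surjective q.toAdd
    exact ⟨k, by simp [hk, ← ofAdd_zsmul], by simp [χ, ← hk, ZMod.lift_coe]⟩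
  obtain ⟨e⟩ := nonempty_mulEquiv_int_prod_of_splitting π χ
    (fun q ↦ by obtain ⟨k, hq, hχq⟩ := hχ q; rw [hχq, map_zpow, hu, hq])
    hc hker (fun q ↦ by obtain ⟨k, -, hχq⟩ := hχ q; exact hχq ▸ hcu.zpow_right k)
  exact ⟨e.trans (MulEquiv.prodMultiplicative ℤ (ZMod p)).symm⟩

theorem nonempty_mulEquiv_int_of_pow_eq (hc : ¬IsOfFinOrder c) (hker : π.ker = zpowers c)
    {s : G} (hs : s ^ p = c) (hπs : π s ≠ 1) : Nonempty (G ≃* Multiplicative ℤ) :=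
  nonempty_mulEquiv_int_of_zpowers_eq_top (fun h ↦ hc (hs ▸ h.pow))
    (zpowers_eq_top_of_ker_le π hπs (hker ▸ zpowers_le.mpr (hs ▸ pow_mem (mem_zpowers s) p)))

theorem nonempty_mulEquiv_int_or_int_prod_zmod_of_commute (hc : ¬IsOfFinOrder c)
    (hker : π.ker = zpowers c) {t : G} (ht : π t = .ofAdd 1) (htc : Commute t c) :
    Nonempty (G ≃* Multiplicative ℤ) ∨ Nonempty (G ≃* Multiplicative (ℤ × ZMod p)) := by
  have hπc : π c = 1 := (hker ▸ mem_zpowers c : c ∈ π.ker)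
  obtain ⟨m, hm⟩ := mem_zpowers_iff.mp (hker ▸ π.pow_mem_ker_of_zmod t)
  by_cases hpm : (p : ℤ) ∣ m
  · obtain ⟨m', rfl⟩ := hpm
    refine .inr (nonempty_mulEquiv_int_prod_zmod π hc hker (u := t * c ^ (-m')) ?_ ?_ ?_)
    · simp [ht, hπc]
    · rw [(htc.zpow_right _).mul_pow, ← hm, ← zpow_natCast (c ^ _), ← zpow_mul, ← zpow_add,
        show (p : ℤ) * m' + -m' * p = 0 by ring, zpow_zero]
    · exact htc.symm.mul_right ((Commute.refl c).zpow_right _)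
  · obtain ⟨x, y, hxy⟩ :=
      (Nat.prime_iff_prime_int.mp Fact.out).coprime_iff_not_dvd.mpr hpm
    refine .inl (nonempty_mulEquiv_int_of_pow_eq π hc hker (s := c ^ x * t ^ y) ?_ ?_)
    · have hty : (t ^ y) ^ p = c ^ (m * y) := by
        rw [← zpow_natCast, ← zpow_mul, mul_comm, zpow_mul, zpow_natCast, ← hm, ← zpow_mul]
      rw [(htc.symm.zpow_zpow x y).mul_pow, hty, ← zpow_natCast, ← zpow_mul, ← zpow_add,
        mul_comm m, hxy, zpow_one]
    · intro h
      have : (y : ZMod p) = 0 := by simpa [ht, hπc, ← ofAdd_zsmul] using h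
      have h1 := congrArg (Int.cast : ℤ → ZMod p) hxy
      rw [Int.cast_add, Int.cast_mul, Int.cast_mul, Int.cast_natCast, ZMod.natCast_self, this]
        at h1
      simp at h1

theorem nonempty_mulEquiv_int_or_int_prod_zmod (hodd : Odd p) (hc : ¬IsOfFinOrder c)
    (hker : π.ker = zpowers c) :
    Nonempty (G ≃* Multiplicative ℤ) ∨ Nonempty (G ≃* Multiplicative (ℤ × ZMod p)) := by
  rcases π.eq_one_or_surjective_of_zmod with h | h
  · exact .inl (nonempty_mulEquiv_int_of_zpowers_eq_top hc (hker ▸ by simp [h]))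
  obtain ⟨t, ht⟩ := h (.ofAdd 1)
  have hcK : c ∈ π.ker := hker ▸ mem_zpowers c
  have htc : Commute t c := by
    refine .of_sq_of_pow_odd hodd (commute_sq_of_conj_mem_zpowers hc ?_ ?_) ?_
    · exact hker ▸ π.normal_ker.conj_mem c hcK t
    · exact hker ▸ π.normal_ker.conj_mem' c hcK t
    · obtain ⟨m, hm⟩ := mem_zpowers_iff.mp (hker ▸ π.pow_mem_ker_of_zmod t)
      exact hm ▸ (Commute.refl c).zpow_left m
  exact nonempty_mulEquiv_int_or_int_prod_zmod_of_commute π hc hker ht htc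

end

namespace SemidirectProduct

variable {N H : Type*} [Group N] [Group H] {φ : H →* MulAut N}

noncomputable def kerRightHomEquiv : (rightHom : N ⋊[φ] H →* H).ker ≃* N :=
  ((MonoidHom.ofInjective inl_injective).trans
    (MulEquiv.subgroupCongr range_inl_eq_ker_rightHom)).symm

theorem exists_injective_ker_rightHom_comp_subtype (V : Subgroup (N ⋊[φ] H)) :
    ∃ f : (rightHom.comp V.subtype).ker →* N, Function.Injective f :=
  ⟨kerRightHomEquiv.toMonoidHom.comp
      ((V.subtype.comp (rightHom.comp V.subtype).ker.subtype).codRestrict _ fun x ↦ x.2),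
    kerRightHomEquiv.injective.comp fun _ _ h ↦
      Subtype.ext (Subtype.ext (congrArg Subtype.val h :))⟩

variable (V : Subgroup (N ⋊[φ] H))

instance [IsMulCommutative N] : IsMulCommutative (rightHom.comp V.subtype).ker :=
  have ⟨f, hf⟩ := exists_injective_ker_rightHom_comp_subtype V
  hf.isMulCommutative f

instance [IsMulTorsionFree N] : IsMulTorsionFree (rightHom.comp V.subtype).ker :=
  have ⟨f, hf⟩ := exists_injective_ker_rightHom_comp_subtype V
  hf.isMulTorsionFree f

theorem isCyclic_ker_rightHom_comp_subtype [IsMulCommutative N] [IsMulTorsionFree N]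
    (C : Subgroup V) [IsCyclic C] [C.FiniteIndex] : IsCyclic (rightHom.comp V.subtype).ker :=
  isCyclic_of_isMulTorsionFree_of_finiteIndex (C.subgroupOf _)

end SemidirectProduct

open SemidirectProduct

/-- for `p` an odd prime, every virtually cyclic subgroup of `Γ = ℤⁿ ⋊_ρ ℤ/p`
is isomorphic to the trivial group, `ℤ/p`, `ℤ`, or `ℤ × ℤ/p`. -/
theorem stmt3 (p n : ℕ) [Fact p.Prime] (hodd : Odd p)
    (ρ : Multiplicative (ZMod p) →* Multiplicative (AddAut (Fin n → ℤ)))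
    (V : Subgroup (Gam p n ρ))
    (hV : ∃ C : Subgroup V, IsCyclic C ∧ C.FiniteIndex) :
    V = ⊥ ∨ Nonempty (V ≃* Multiplicative (ZMod p)) ∨ Nonempty (V ≃* Multiplicative ℤ) ∨
      Nonempty (V ≃* Multiplicative (ℤ × ZMod p)) := by
  obtain ⟨C, _, _⟩ := hV
  have := isCyclic_ker_rightHom_comp_subtype V C
  rcases (rightHom.comp V.subtype).ker.eq_bot_or_eq_zpowers_of_isMulTorsionFree with
    hK | ⟨c, hc, hK⟩
  · rcases subsingleton_or_nonempty_mulEquiv_zmod _ ((MonoidHom.ker_eq_bot_iff _).mp hK) with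
      h | h
    · exact .inl V.eq_bot_of_subsingleton
    · exact .inr (.inl h)
  · exact .inr (.inr (nonempty_mulEquiv_int_or_int_prod_zmod _ hodd hc hK))
end

section
/- Suppose p is an odd prime and V is an infinite virtually cyclic subgroup of Γ = ℤⁿ ⋊_ρ ℤ/p that contains an element of order p. Then every element (v,0) of V ∩ (ℤⁿ × {0}) satisfies ρ(g)v = v for all g ∈ ℤ/p, and V is isomorphic to ℤ × ℤ/p. -/
open Subgroup

theorem isCyclic_of_injective_of_finiteIndex {A G : Type*} [CommGroup A] [IsMulTorsionFree A]
    [Group G] {f : A →* G} (hf : Function.Injective f) (C : Subgroup G) [IsCyclic C]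
    [C.FiniteIndex] : IsCyclic A :=
  have hmem (a : A) : f (a ^ C.index.factorial) ∈ C := by
    rw [map_pow]
    exact C.pow_mem_of_index_ne_zero_of_dvd C.index_ne_zero_of_finite (f a)
      fun m hm hle => Nat.dvd_factorial hm hle
  isCyclic_of_injective ((f.comp (powMonoidHom _)).codRestrict C hmem)
    fun _ _ h => hf.comp (pow_left_injective C.index.factorial_ne_zero) (congrArg Subtype.val h)

theorem MulAut.apply_eq_self_of_apply_eq_zpow {M : Type*} [Group M] [IsMulTorsionFree M]
    {p : ℕ} (hp : Odd p) {e : MulAut M} (he : e ^ p = 1) {a : M} (ha : a ≠ 1) {k : ℤ}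
    (hk : e a = a ^ k) : e a = a := by
  have hpow (j : ℕ) : (e ^ j) a = a ^ k ^ j := by
    induction j with
    | zero => simp
    | succ j ih => rw [pow_succ', MulAut.mul_apply, ih, map_zpow, hk, ← zpow_mul, pow_succ']
  have hkp : k ^ p = 1 := by
    have h : a ^ (k ^ p - 1) = 1 := by
      rw [zpow_sub, zpow_one, ← hpow, he, MulAut.one_apply, mul_inv_cancel]
    exact sub_eq_zero.1 ((IsMulTorsionFree.zpow_eq_one_iff_right ha).1 h)
  rw [hk, hp.pow_inj.1 (hkp.trans (one_pow p).symm), zpow_one]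

theorem MonoidHom.apply_eq_self_of_zpowers_eq_top {G M : Type*} [Group G] [Group M]
    (φ : G →* MulAut M) {σ : G} (hσ : zpowers σ = ⊤) {a : M} (ha : φ σ a = a) (g : G) :
    φ g a = a :=
  have : zpowers σ ≤ (MulAction.stabilizer (MulAut M) a).comap φ := zpowers_le.2 ha
  this (hσ ▸ mem_top g)

noncomputable def MonoidHom.noncommCoprodMulEquiv {M N P : Type*} [Group M] [Group N] [Group P]
    (f : M →* P) (g : N →* P) (comm : ∀ m n, Commute (f m) (g n)) (hf : Function.Injective f)
    (hg : Function.Injective g) (hdisj : Disjoint f.range g.range)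
    (hsup : f.range ⊔ g.range = ⊤) : M × N ≃* P :=
  MulEquiv.ofBijective (f.noncommCoprod g comm)
    ⟨(noncommCoprod_injective f g comm).2 ⟨hf, hg, hdisj⟩,
      MonoidHom.range_eq_top.1 (by rw [noncommCoprod_range, hsup])⟩

namespace SemidirectProduct

variable {N G : Type*} [Group N] [Group G] {φ : G →* MulAut N}

theorem inl_left_of_right_eq_one {x : N ⋊[φ] G} (h : x.right = 1) : inl x.left = x := by
  ext <;> simp [h]

theorem eq_one_of_isOfFinOrder_of_right_eq_one [IsMulTorsionFree N] {x : N ⋊[φ] G}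
    (hx : IsOfFinOrder x) (h : x.right = 1) : x = 1 := by
  rw [← inl_left_of_right_eq_one h, inl_injective.isOfFinOrder_iff, isOfFinOrder_iff_eq_one] at hx
  rw [← inl_left_of_right_eq_one h, hx, map_one]

theorem zpowers_right_eq_top_of_orderOf_eq_card [IsMulTorsionFree N] {p : ℕ}
    [hp : Fact p.Prime] (hG : Nat.card G = p) {x : N ⋊[φ] G} (hx : orderOf x = p) :
    zpowers x.right = ⊤ := by
  refine zpowers_eq_top_of_prime_card hG fun h => ?_
  have hx1 : x = 1 :=
    eq_one_of_isOfFinOrder_of_right_eq_one (orderOf_pos_iff.1 (hx ▸ hp.out.pos)) h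
  rw [hx1, orderOf_one] at hx
  exact hp.out.one_lt.ne hx

variable {V : Subgroup (N ⋊[φ] G)}

theorem subgroupComap_inl_injective : Function.Injective (inl.subgroupComap V) :=
  fun _ _ h => Subtype.ext (inl_injective congr($h.1))

theorem mem_range_subgroupComap_inl {x : V} :
    x ∈ (inl.subgroupComap V).range ↔ (x : N ⋊[φ] G).right = 1 := by
  refine ⟨?_, fun h => ⟨⟨_, show inl _ ∈ V by rw [inl_left_of_right_eq_one h]; exact x.2⟩, ?_⟩⟩
  · rintro ⟨n, rfl⟩
    rfl
  · exact Subtype.ext (inl_left_of_right_eq_one h)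

theorem finite_of_comap_inl_eq_bot [Finite G] (h : V.comap inl = ⊥) : Finite V := by
  refine Finite.of_injective (rightHom.comp V.subtype) ((injective_iff_map_eq_one _).2 ?_)
  intro x hx
  obtain ⟨n, hn⟩ := mem_range_subgroupComap_inl.2 hx
  have hn1 : n = 1 := Subtype.ext ((Subgroup.eq_bot_iff_forall _).1 h n n.2)
  rw [← hn, hn1, map_one]

theorem range_subgroupComap_inl_sup_zpowers {u : V} (hu : zpowers (u : N ⋊[φ] G).right = ⊤) :
    (inl.subgroupComap V).range ⊔ zpowers u = ⊤ := by
  refine (eq_top_iff' _).2 fun x => ?_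
  obtain ⟨j, hj⟩ := mem_zpowers_iff.1 (hu ▸ mem_top (x : N ⋊[φ] G).right)
  have hx : x * (u ^ j)⁻¹ ∈ (inl.subgroupComap V).range := by
    rw [mem_range_subgroupComap_inl]
    change rightHom (_ * (_ ^ j)⁻¹) = 1
    rw [map_mul, map_inv, map_zpow]
    exact mul_inv_eq_one.2 hj.symm
  simpa using mul_mem_sup hx (zpow_mem (mem_zpowers u) j)

section CommGroup

variable {N : Type*} [CommGroup N] {φ : G →* MulAut N} {V : Subgroup (N ⋊[φ] G)}

theorem mul_inl_mul_inv (x : N ⋊[φ] G) (n : N) : x * inl n * x⁻¹ = inl (φ x.right n) := by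
  ext <;> simp [mul_comm]

theorem commute_inl_of_apply_eq_self {x : N ⋊[φ] G} {n : N} (h : φ x.right n = n) :
    Commute x (inl n) :=
  mul_inv_eq_iff_eq_mul.1 (by rw [mul_inl_mul_inv, h])

theorem apply_right_mem_comap_inl {x : N ⋊[φ] G} (hx : x ∈ V) {n : N} (hn : n ∈ V.comap inl) :
    φ x.right n ∈ V.comap inl := by
  rw [mem_comap, ← mul_inl_mul_inv]
  exact mul_mem (mul_mem hx hn) (inv_mem hx)

variable [IsMulTorsionFree N]

theorem exists_zpowers_eq_comap_inl [Finite G] [Infinite V] (C : Subgroup V) [IsCyclic C]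
    [C.FiniteIndex] : ∃ a ≠ 1, zpowers a = V.comap inl := by
  have : IsCyclic (V.comap inl) :=
    isCyclic_of_injective_of_finiteIndex subgroupComap_inl_injective C
  obtain ⟨a, ha⟩ := (V.comap inl).isCyclic_iff_exists_zpowers_eq_top.1 this
  refine ⟨a, fun ha1 => ?_, ha⟩
  have : Finite V := finite_of_comap_inl_eq_bot (by rw [← ha, ha1, zpowers_one_eq_bot])
  exact not_finite V

theorem apply_eq_self_of_mem_comap_inl (hG : Odd (Nat.card G)) {a : N} (ha1 : a ≠ 1)
    (ha : zpowers a = V.comap inl) {u : N ⋊[φ] G} (hu : u ∈ V) (hσ : zpowers u.right = ⊤)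
    {v : N} (hv : v ∈ V.comap inl) (g : G) : φ g v = v := by
  obtain ⟨k, hk⟩ := mem_zpowers_iff.1 (ha ▸ apply_right_mem_comap_inl hu (ha ▸ mem_zpowers a))
  have hφ : φ u.right ^ Nat.card G = 1 := by rw [← map_pow, pow_card_eq_one', map_one]
  have hfix : φ u.right a = a := MulAut.apply_eq_self_of_apply_eq_zpow hG hφ ha1 hk.symm
  obtain ⟨m, rfl⟩ := mem_zpowers_iff.1 (ha ▸ hv)
  rw [map_zpow, φ.apply_eq_self_of_zpowers_eq_top hσ hfix g]

theorem disjoint_range_subgroupComap_inl_zpowers {u : V} (hu : IsOfFinOrder u) :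
    Disjoint (inl.subgroupComap V).range (zpowers u) := by
  rw [disjoint_def]
  intro x hx hxu
  have hx' : IsOfFinOrder (x : N ⋊[φ] G) :=
    (V.subtype_injective.isOfFinOrder_iff (f := V.subtype)).2 (hu.of_mem_zpowers hxu)
  exact Subtype.ext <|
    eq_one_of_isOfFinOrder_of_right_eq_one hx' (mem_range_subgroupComap_inl.1 hx)

theorem nonempty_mulEquiv_int_prod {p : ℕ} [hp : Fact p.Prime] (hG : Nat.card G = p)
    {a : N} (ha1 : a ≠ 1) (ha : zpowers a = V.comap inl) {u : N ⋊[φ] G} (hu : u ∈ V)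
    (hup : orderOf u = p) (hfix : ∀ v ∈ V.comap inl, φ u.right v = v) :
    Nonempty (V ≃* Multiplicative ℤ × G) := by
  set u' : V := ⟨u, hu⟩
  have hu'p : orderOf u' = p := (orderOf_mk u hu).trans hup
  have comm (m : V.comap inl) (n : zpowers u') :
      Commute (inl.subgroupComap V m) ((zpowers u').subtype n) := by
    obtain ⟨_, j, rfl⟩ := n
    have hcomm : Commute u' (inl.subgroupComap V m) :=
      Subtype.ext (commute_inl_of_apply_eq_self (hfix m m.2)).eq
    exact hcomm.symm.zpow_right j
  have : IsCyclic G := isCyclic_of_prime_card hG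
  have hdisj :=
    disjoint_range_subgroupComap_inl_zpowers (orderOf_pos_iff.1 (hu'p ▸ hp.out.pos))
  have hsup := range_subgroupComap_inl_sup_zpowers (u := u')
    (zpowers_right_eq_top_of_orderOf_eq_card hG hup)
  rw [← range_subtype (zpowers u')] at hdisj hsup
  let e := MonoidHom.noncommCoprodMulEquiv _ _ comm subgroupComap_inl_injective
    (zpowers u').subtype_injective hdisj hsup
  refine ⟨e.symm.trans (MulEquiv.prodCongr ((MulEquiv.subgroupCongr ha).symm.trans
    (mulEquivOfCyclicCardEq ?_)) (mulEquivOfCyclicCardEq ?_))⟩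
  · rw [Nat.card_zpowers, orderOf_eq_zero (not_isOfFinOrder_of_isMulTorsionFree ha1),
      Nat.card_eq_zero_of_infinite]
  · rw [Nat.card_zpowers, hu'p, hG]

end CommGroup

end SemidirectProduct

open SemidirectProduct Multiplicative in
/-- for `p` an odd prime, if `V` is an infinite virtually cyclic subgroup of
`Γ = ℤⁿ ⋊_ρ ℤ/p` containing an element of order `p`, then every element `(v,0)` of
`V ∩ (ℤⁿ × {0})` satisfies `ρ(g)v = v` for all `g ∈ ℤ/p`, and `V ≅ ℤ × ℤ/p`. -/
theorem stmt4 (p n : ℕ) [Fact p.Prime] (hodd : Odd p)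
    (ρ : Multiplicative (ZMod p) →* Multiplicative (AddAut (Fin n → ℤ)))
    (V : Subgroup (Gam p n ρ)) (hinf : Infinite V)
    (hV : ∃ C : Subgroup V, IsCyclic C ∧ C.FiniteIndex)
    (htor : ∃ u ∈ V, orderOf u = p) :
    (∀ v : Fin n → ℤ,
        (⟨Multiplicative.ofAdd v, Multiplicative.ofAdd (0 : ZMod p)⟩ : Gam p n ρ) ∈ V →
        ∀ g : ZMod p, Multiplicative.toAdd (ρ (Multiplicative.ofAdd g)) v = v) ∧
    Nonempty (V ≃* Multiplicative (ℤ × ZMod p)) := by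
  obtain ⟨C, hC, hCi⟩ := hV
  obtain ⟨u, hu, hup⟩ := htor
  have hG : Nat.card (Multiplicative (ZMod p)) = p := Nat.card_zmod p
  obtain ⟨a, ha1, ha⟩ := exists_zpowers_eq_comap_inl C
  have hσ := zpowers_right_eq_top_of_orderOf_eq_card hG hup
  have hfix {v} (hv : v ∈ V.comap inl) (g) :=
    apply_eq_self_of_mem_comap_inl (by rwa [hG]) ha1 ha hu hσ hv g
  refine ⟨fun v hv g => congrArg toAdd (hfix hv (ofAdd g)), ?_⟩
  obtain ⟨e⟩ := nonempty_mulEquiv_int_prod hG ha1 ha hu hup fun v hv => hfix hv _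
  exact ⟨e.trans (MulEquiv.prodMultiplicative _ _).symm⟩
end

section
/- Fix a generator t of ℤ/p. The assignment sending x ∈ ker(Norm_t) to the cyclic subgroup of Γ = ℤⁿ ⋊_ρ ℤ/p generated by (x,t) induces a bijection from the quotient group ker(Norm_t)/im(1 − ρ(t)) to the set of conjugacy classes of subgroups of order p of Γ. -/
/-- The norm map `Norm_t : ℤⁿ → ℤⁿ`, `x ↦ Σ_{i=0}^{p−1} ρ(t)^i x`. -/
noncomputable def gammaNormHom (p n : ℕ) (ρ : Multiplicative (ZMod p) →* Multiplicative (AddAut (Fin n → ℤ)))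
    (t : ZMod p) : (Fin n → ℤ) →+ (Fin n → ℤ) :=
  ∑ i ∈ Finset.range p, (Multiplicative.toAdd ((ρ (Multiplicative.ofAdd t)) ^ i)).toAddMonoidHom

/-- The endomorphism `1 − ρ(t)` of `ℤⁿ`. -/
def oneSubHom (p n : ℕ) (ρ : Multiplicative (ZMod p) →* Multiplicative (AddAut (Fin n → ℤ)))
    (t : ZMod p) : (Fin n → ℤ) →+ (Fin n → ℤ) :=
  AddMonoidHom.id (Fin n → ℤ) - (Multiplicative.toAdd (ρ (Multiplicative.ofAdd t))).toAddMonoidHom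

/-!
Since `ℤⁿ` is torsion-free, the projection `Γ → ℤ/p` is injective on every finite subgroup of `Γ`.
Hence a subgroup of order `p` contains exactly one element `(x, t)` lying over `t`, and
`x ∈ ker Norm_t` because `(x, t)^p = (Norm_t x, 0)`. Conjugating `(x, t)` by `(y, g)` gives
`((1 − ρ(t)) y + ρ(g) x, t)`, and `ρ(g) x − x ∈ im(1 − ρ(t))` because `g` is a multiple of `t`;
so the subgroups generated by `(x, t)` and `(x', t)` are conjugate exactly when
`x' − x ∈ im(1 − ρ(t))`.
-/

namespace SemidirectProduct

theorem injOn_right_of_finite {N G : Type*} [Group N] [Group G]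
    [IsMulTorsionFree N] {φ : G →* MulAut N} (H : Subgroup (N ⋊[φ] G)) [Finite H] :
    Set.InjOn right (H : Set (N ⋊[φ] G)) := by
  intro a ha b hb hab
  set c := a⁻¹ * b
  have hc : c = inl c.left := by
    have hright : c.right = 1 := by simp [c, hab]
    rw [← inl_left_mul_inr_right c, hright, map_one, mul_one, left_inl]
  have hfin : IsOfFinOrder c :=
    H.subtype.isOfFinOrder (isOfFinOrder_of_finite (⟨c, H.mul_mem (H.inv_mem ha) hb⟩ : H))
  rw [hc, inl_injective.isOfFinOrder_iff, isOfFinOrder_iff_eq_one] at hfin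
  rw [← inv_mul_eq_one]
  change c = 1
  rw [hc, hfin, map_one]

end SemidirectProduct

open Pointwise in
theorem Subgroup.equivalence_exists_map_conj (G : Type*) [Group G] :
    Equivalence fun H K : Subgroup G => ∃ γ : G, H.map (MulAut.conj γ).toMonoidHom = K := by
  change Equivalence fun H K : Subgroup G => ∃ γ : G, MulAut.conj γ • H = K
  refine ⟨fun H => ⟨1, by rw [map_one, one_smul]⟩, fun ⟨γ, hγ⟩ => ⟨γ⁻¹, ?_⟩,
    fun ⟨γ, hγ⟩ ⟨δ, hδ⟩ => ⟨δ * γ, by rw [map_mul, mul_smul, hγ, hδ]⟩⟩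
  rw [← hγ, smul_smul, ← map_mul, inv_mul_cancel, map_one, one_smul]

theorem AddSubgroup.ne_zero_of_zmultiples_eq_top {A : Type*} [AddGroup A] [Nontrivial A] {t : A}
    (ht : zmultiples t = ⊤) : t ≠ 0 := by
  rintro rfl
  rw [zmultiples_zero_eq_bot] at ht
  exact bot_ne_top ht

namespace Quotient

variable {α β : Type*} {s : Setoid α} {r : β → β → Prop}

noncomputable def equivQuotOfRelIff (hr : Equivalence r) (f : α → β)
    (hf : ∀ a b, r (f a) (f b) ↔ s a b) (hsurj : ∀ b, ∃ a, r (f a) b) : Quotient s ≃ Quot r :=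
  Equiv.ofBijective (Quotient.lift (Quot.mk r ∘ f) fun a b h => Quot.sound ((hf a b).2 h))
    ⟨fun x y => Quotient.inductionOn₂ x y fun a b h =>
        Quotient.sound ((hf a b).1 ((hr.quot_mk_eq_iff _ _).1 h)),
      fun y => Quot.inductionOn y fun b =>
        (hsurj b).elim fun a h => ⟨⟦a⟧, Quot.sound h⟩⟩

end Quotient

namespace Gam

open Multiplicative

variable {p n : ℕ} {ρ : Multiplicative (ZMod p) →* Multiplicative (AddAut (Fin n → ℤ))}

def mk (x : Fin n → ℤ) (g : ZMod p) : Gam p n ρ := ⟨ofAdd x, ofAdd g⟩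

theorem mk_left_right (γ : Gam p n ρ) : mk (toAdd γ.left) (toAdd γ.right) = γ := rfl

theorem mk_inj {x x' : Fin n → ℤ} {g g' : ZMod p} :
    (mk x g : Gam p n ρ) = mk x' g' ↔ x = x' ∧ g = g' := by
  simp [mk, SemidirectProduct.ext_iff]

theorem mk_zero_zero : (mk 0 0 : Gam p n ρ) = 1 := rfl

theorem mk_mul (x x' : Fin n → ℤ) (g g' : ZMod p) :
    (mk x g * mk x' g' : Gam p n ρ) = mk (x + toAdd (ρ (ofAdd g)) x') (g + g') := rfl

theorem mk_pow (x : Fin n → ℤ) (g : ZMod p) (k : ℕ) :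
    (mk x g : Gam p n ρ) ^ k = mk (∑ i ∈ Finset.range k, toAdd (ρ (ofAdd g) ^ i) x) (k • g) := by
  induction k with
  | zero => simp [mk_zero_zero]
  | succ k ih => rw [pow_succ, ih, mk_mul, Finset.sum_range_succ, succ_nsmul, ofAdd_nsmul, map_pow]

theorem gammaNormHom_apply (t : ZMod p) (x : Fin n → ℤ) :
    gammaNormHom p n ρ t x = ∑ i ∈ Finset.range p, toAdd (ρ (ofAdd t) ^ i) x := by
  simp [gammaNormHom]

theorem oneSubHom_apply (t : ZMod p) (y : Fin n → ℤ) :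
    oneSubHom p n ρ t y = y - toAdd (ρ (ofAdd t)) y := rfl

theorem mk_pow_prime_eq_one_iff {x : Fin n → ℤ} {t : ZMod p} :
    (mk x t : Gam p n ρ) ^ p = 1 ↔ x ∈ (gammaNormHom p n ρ t).ker := by
  rw [mk_pow, ← mk_zero_zero, mk_inj, nsmul_eq_mul, ZMod.natCast_self, zero_mul,
    AddMonoidHom.mem_ker, gammaNormHom_apply, and_iff_left rfl]

theorem card_zpowers_mk [Fact p.Prime] {x : Fin n → ℤ} {t : ZMod p} (ht : t ≠ 0)
    (hx : x ∈ (gammaNormHom p n ρ t).ker) :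
    Nat.card (Subgroup.zpowers (mk x t : Gam p n ρ)) = p := by
  rw [Nat.card_zpowers]
  refine orderOf_eq_prime (mk_pow_prime_eq_one_iff.2 hx) fun h => ht ?_
  exact (mk_inj.1 (h.trans mk_zero_zero.symm)).2

theorem conj_mk (y x : Fin n → ℤ) (g t : ZMod p) :
    MulAut.conj (mk y g) (mk x t : Gam p n ρ)
      = mk (oneSubHom p n ρ t y + toAdd (ρ (ofAdd g)) x) t := by
  rw [MulAut.conj_apply, mul_inv_eq_iff_eq_mul, mk_mul, mk_mul, add_comm g, mk_inj]
  refine ⟨?_, rfl⟩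
  rw [oneSubHom_apply]
  abel

theorem pow_apply_sub_mem_range_oneSubHom (t : ZMod p) (k : ℕ) (x : Fin n → ℤ) :
    toAdd (ρ (ofAdd t) ^ k) x - x ∈ (oneSubHom p n ρ t).range := by
  induction k with
  | zero => simp
  | succ k ih =>
    have h : toAdd (ρ (ofAdd t) ^ (k + 1)) x - x
        = (toAdd (ρ (ofAdd t) ^ k) x - x) - oneSubHom p n ρ t (toAdd (ρ (ofAdd t) ^ k) x) := by
      rw [pow_succ', toAdd_mul, AddAut.add_apply]
      rw [oneSubHom_apply]
      abel
    rw [h]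
    exact sub_mem ih ⟨_, rfl⟩

theorem apply_sub_mem_range_oneSubHom [NeZero p] {t : ZMod p}
    (ht : AddSubgroup.zmultiples t = ⊤) (g : ZMod p) (x : Fin n → ℤ) :
    toAdd (ρ (ofAdd g)) x - x ∈ (oneSubHom p n ρ t).range := by
  obtain ⟨k, rfl⟩ := mem_multiples_iff_mem_zmultiples.2 (ht ▸ AddSubgroup.mem_top g)
  rw [ofAdd_nsmul, map_pow]
  exact pow_apply_sub_mem_range_oneSubHom t k x

theorem exists_map_conj_zpowers_mk_eq_iff [Fact p.Prime] {t : ZMod p}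
    (ht : AddSubgroup.zmultiples t = ⊤) (x : Fin n → ℤ) {x' : Fin n → ℤ}
    (hx' : x' ∈ (gammaNormHom p n ρ t).ker) :
    (∃ γ : Gam p n ρ, (Subgroup.zpowers (mk x t)).map (MulAut.conj γ).toMonoidHom
        = Subgroup.zpowers (mk x' t)) ↔ x' - x ∈ (oneSubHom p n ρ t).range := by
  constructor
  · rintro ⟨γ, hγ⟩
    have hmem : MulAut.conj γ (mk x t) ∈ Subgroup.zpowers (mk x' t) :=
      hγ ▸ Subgroup.mem_map_of_mem _ (Subgroup.mem_zpowers _)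
    have : Finite (Subgroup.zpowers (mk x' t : Gam p n ρ)) :=
      Nat.finite_of_card_ne_zero <| by
        rw [card_zpowers_mk (AddSubgroup.ne_zero_of_zmultiples_eq_top ht) hx']; exact NeZero.ne p
    rw [← mk_left_right γ, conj_mk] at hmem
    obtain ⟨hx'_eq, -⟩ := mk_inj.1 <|
      SemidirectProduct.injOn_right_of_finite _ hmem (Subgroup.mem_zpowers _) rfl
    rw [← hx'_eq, add_sub_assoc]
    exact add_mem ⟨_, rfl⟩ (apply_sub_mem_range_oneSubHom ht _ x)
  · rintro ⟨y, hy⟩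
    refine ⟨mk y 0, ?_⟩
    rw [MonoidHom.map_zpowers]
    congr 1
    change MulAut.conj (mk y 0) (mk x t) = mk x' t
    rw [conj_mk, hy, ofAdd_zero, map_one, toAdd_one, AddAut.zero_apply, sub_add_cancel]

theorem exists_mem_ker_zpowers_mk_eq [Fact p.Prime] {t : ZMod p} (ht : t ≠ 0)
    (H : Subgroup (Gam p n ρ)) (hH : Nat.card H = p) :
    ∃ x ∈ (gammaNormHom p n ρ t).ker, Subgroup.zpowers (mk x t) = H := by
  have : Finite H := Nat.finite_of_card_ne_zero (by rw [hH]; exact NeZero.ne p)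
  have hmap : H.map SemidirectProduct.rightHom = ⊤ := by
    have : Fact (Nat.card (Multiplicative (ZMod p))).Prime := by
      rwa [Nat.card_congr Multiplicative.toAdd, Nat.card_zmod]
    refine (H.map _).eq_bot_or_eq_top_of_prime_card.resolve_left fun hbot => ?_
    have : Nontrivial H := by
      rw [← Finite.one_lt_card_iff_nontrivial, hH]
      exact (Fact.out : p.Prime).one_lt
    obtain ⟨u, hu⟩ := exists_ne (1 : H)
    have hu_right : u.1.right = (1 : Gam p n ρ).right :=
      (Subgroup.mem_bot.1 (hbot ▸ Subgroup.mem_map_of_mem _ u.2) :)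
    exact hu (Subtype.ext (SemidirectProduct.injOn_right_of_finite H u.2 H.one_mem hu_right))
  obtain ⟨h, hhH, hh⟩ := hmap ▸ Subgroup.mem_top (ofAdd t)
  have h_eq : h = mk (toAdd h.left) t := congrArg (mk _ ∘ toAdd) hh
  rw [h_eq] at hhH
  have hx : toAdd h.left ∈ (gammaNormHom p n ρ t).ker := by
    rw [← mk_pow_prime_eq_one_iff, ← orderOf_dvd_iff_pow_eq_one]
    exact (Subgroup.orderOf_dvd_natCard H hhH).trans (dvd_of_eq hH)
  refine ⟨_, hx, Subgroup.eq_of_le_of_card_ge (Subgroup.zpowers_le.2 hhH) ?_⟩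
  rw [hH, card_zpowers_mk ht hx]

end Gam

/-- for a generator `t` of `ℤ/p`, the assignment `x ↦ ⟨(x,t)⟩` induces a bijection
from `ker(Norm_t)/im(1 − ρ(t))` to the set of conjugacy classes of subgroups of order `p`
of `Γ = ℤⁿ ⋊_ρ ℤ/p`. -/
theorem stmt6 (p n : ℕ) [Fact p.Prime]
    (ρ : Multiplicative (ZMod p) →* Multiplicative (AddAut (Fin n → ℤ)))
    (t : ZMod p) (ht : AddSubgroup.zmultiples t = ⊤) :
    ∃ e : (↥(gammaNormHom p n ρ t).ker ⧸
            ((oneSubHom p n ρ t).range.addSubgroupOf (gammaNormHom p n ρ t).ker)) ≃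
          Quot (fun (H K : {H : Subgroup (Gam p n ρ) // Nat.card H = p}) =>
            ∃ γ : Gam p n ρ,
              (H : Subgroup (Gam p n ρ)).map (MulAut.conj γ).toMonoidHom = (K : Subgroup (Gam p n ρ))),
      ∀ (x : Fin n → ℤ) (hx : x ∈ (gammaNormHom p n ρ t).ker)
        (H : Subgroup (Gam p n ρ)) (hH : Nat.card H = p),
        e (QuotientAddGroup.mk ⟨x, hx⟩) = Quot.mk _ ⟨H, hH⟩ ↔
          ∃ γ : Gam p n ρ,
            (Subgroup.zpowers
                (⟨Multiplicative.ofAdd x, Multiplicative.ofAdd t⟩ : Gam p n ρ)).map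
                (MulAut.conj γ).toMonoidHom = H := by
  have ht₀ := AddSubgroup.ne_zero_of_zmultiples_eq_top ht
  have hr := (Subgroup.equivalence_exists_map_conj (Gam p n ρ)).comap
    (Subtype.val : {H : Subgroup (Gam p n ρ) // Nat.card H = p} → _)
  let f (x : (gammaNormHom p n ρ t).ker) : {H : Subgroup (Gam p n ρ) // Nat.card H = p} :=
    ⟨Subgroup.zpowers (Gam.mk x t), Gam.card_zpowers_mk ht₀ x.2⟩
  refine ⟨Quotient.equivQuotOfRelIff hr f (fun x x' => ?_) (fun ⟨H, hH⟩ => ?_),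
    fun x hx H hH => hr.quot_mk_eq_iff _ _⟩
  · rw [QuotientAddGroup.leftRel_apply, AddSubgroup.mem_addSubgroupOf, AddSubgroup.coe_add,
      AddSubgroup.coe_neg, neg_add_eq_sub]
    exact Gam.exists_map_conj_zpowers_mk_eq_iff ht x x'.2
  · obtain ⟨x, hx, rfl⟩ := Gam.exists_mem_ker_zpowers_mk_eq ht₀ H hH
    exact ⟨⟨x, hx⟩, hr.refl _⟩
end
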